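/- (Convergence of the synchronous relaxed nonstationary multisplitting method, M-matrix case.) Let A ∈ ℝ^{n×n} be an M-matrix, let D be its diagonal part and B = D − A, and set θ = ρ(D⁻¹B). Let ω ∈ (0, 2/(1+θ)). For i = 1, …, m, let A = M_i − N_i be M-splittings, and let E₁, …, E_m be nonnegative diagonal matrices with Σ_{i=1}^m E_i = I. Let η = θ / (Σ_{i=1}^m ‖E_i‖), and suppose s̃ is a positive integer such that ‖(M_i⁻¹N_i)^s‖ ≤ η for all s ≥ s̃ and all i = 1, …, m, where ‖·‖ is the matrix ∞-norm. Let x* ∈ ℝⁿ be a solution of LCP(A, f). Let integers s(k,i) ≥ s̃ be given for all k ≥ 1 and i = 1, …, m, and define the sequence {x^k} by: given x^k, for each i set y^{0,i} = x^k and for j = 1, …, s(k,i) let y^{j,i} solve LCP(M_i, f + N_i y^{j−1,i}); then x^{k+1} = ω Σ_{i=1}^m E_i y^{s(k,i),i} + (1−ω) x^k. Then x^k converges to x* as k → ∞. -/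

import Mathlib

open Matrix Filter

noncomputable section

/-- Comparison matrix `⟨A⟩`: `α_ii = |a_ii|`, `α_ij = -|a_ij|` for `i ≠ j`. -/
def cmpMat {n : ℕ} (A : Matrix (Fin n) (Fin n) ℝ) : Matrix (Fin n) (Fin n) ℝ :=
  Matrix.of fun i j => if i = j then |A i j| else -|A i j|

/-- Entrywise absolute value of a matrix. -/
def absMat {n : ℕ} (A : Matrix (Fin n) (Fin n) ℝ) : Matrix (Fin n) (Fin n) ℝ :=
  Matrix.of fun i j => |A i j|

/-- `A` is an M-matrix: nonpositive off-diagonal entries, nonsingular,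
and entrywise nonnegative inverse. -/
def IsMMat {n : ℕ} (A : Matrix (Fin n) (Fin n) ℝ) : Prop :=
  (∀ i j, i ≠ j → A i j ≤ 0) ∧ IsUnit A.det ∧ ∀ i j, 0 ≤ A⁻¹ i j

/-- `A` is an H-matrix: its comparison matrix is an M-matrix. -/
def IsHMat {n : ℕ} (A : Matrix (Fin n) (Fin n) ℝ) : Prop := IsMMat (cmpMat A)

/-- `A` is an H₊-matrix: an H-matrix with positive diagonal entries. -/
def IsHpMat {n : ℕ} (A : Matrix (Fin n) (Fin n) ℝ) : Prop :=
  IsHMat A ∧ ∀ i, 0 < A i i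

/-- Spectral radius of a real matrix: supremum of moduli of its complex eigenvalues. -/
def specRad {n : ℕ} (A : Matrix (Fin n) (Fin n) ℝ) : ℝ :=
  sSup {r : ℝ | ∃ μ : ℂ, μ ∈ spectrum ℂ (A.map Complex.ofReal) ∧ r = ‖μ‖}

/-- Matrix ∞-norm: maximum absolute row sum. -/
def infNorm {n : ℕ} (A : Matrix (Fin n) (Fin n) ℝ) : ℝ :=
  ⨆ i, ∑ j, |A i j|

/-- `x` solves the linear complementarity problem LCP(A, f):
`x ≥ 0`, `Ax - f ≥ 0`, `xᵀ(Ax - f) = 0`. -/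
def SolvesLCP {n : ℕ} (A : Matrix (Fin n) (Fin n) ℝ) (f x : Fin n → ℝ) : Prop :=
  (∀ j, 0 ≤ x j) ∧ (∀ j, f j ≤ (A *ᵥ x) j) ∧ ∑ j, x j * ((A *ᵥ x) j - f j) = 0

end

/-! If `M` is an M-matrix, the solution map of `LCP(M, g)` satisfies `|x - x'| ≤ M⁻¹ |g - g'|`
entrywise. Each inner sweep of the method therefore multiplies the entrywise error by
`M_i⁻¹ N_i`, and after `s(k,i) ≥ s̃` sweeps its sup norm by at most `η`. The weights `E_i` are a
diagonal partition of unity, so the relaxed outer step contracts the error by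
`ωη + |1 - ω| ≤ ωθ + |1 - ω| < 1`; here `θ < 1` because the Jacobi matrix `D⁻¹B = 1 - D⁻¹A` of
an M-matrix has the nonnegative inverse `A⁻¹D` of `1 - D⁻¹B`. -/

open Topology

section NonnegMatrix

variable {ι : Type*} [Fintype ι]

lemma Matrix.mulVec_le_mulVec_of_nonneg {B : Matrix ι ι ℝ} (hB : ∀ p q, 0 ≤ B p q)
    {u v : ι → ℝ} (h : u ≤ v) : B *ᵥ u ≤ B *ᵥ v :=
  fun p => Finset.sum_le_sum fun q _ => mul_le_mul_of_nonneg_left (h q) (hB p q)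

lemma Matrix.abs_mulVec_le_of_nonneg {B : Matrix ι ι ℝ} (hB : ∀ p q, 0 ≤ B p q) (v : ι → ℝ) :
    |B *ᵥ v| ≤ B *ᵥ |v| := fun p => by
  simp only [Pi.abs_apply, mulVec, dotProduct]
  calc |∑ q, B p q * v q| ≤ ∑ q, |B p q * v q| := Finset.abs_sum_le_sum_abs _ _
    _ = ∑ q, B p q * |v q| := by simp only [abs_mul, abs_of_nonneg (hB p _)]

lemma Matrix.mulVec_apply_le_of_offDiag_nonpos {M : Matrix ι ι ℝ}
    (hM : ∀ p q, p ≠ q → M p q ≤ 0) {u v : ι → ℝ} (huv : u ≤ v) {p : ι} (hp : u p = v p) :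
    (M *ᵥ v) p ≤ (M *ᵥ u) p := by
  refine Finset.sum_le_sum fun q _ => ?_
  rcases eq_or_ne p q with rfl | hpq
  · rw [hp]
  · exact mul_le_mul_of_nonpos_left (huv q) (hM p q hpq)

lemma Matrix.mulVec_apply_of_offDiag_eq_zero {E : Matrix ι ι ℝ}
    (hE : ∀ p q, p ≠ q → E p q = 0) (v : ι → ℝ) (p : ι) : (E *ᵥ v) p = E p p * v p :=
  Fintype.sum_eq_single p fun q hq => by simp [hE p q hq.symm]

instance Pi.hasSolidNorm {G : ι → Type*} [∀ i, NormedAddCommGroup (G i)] [∀ i, Lattice (G i)]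
    [∀ i, HasSolidNorm (G i)] : HasSolidNorm (∀ i, G i) where
  solid _ b h := (pi_norm_le_iff_of_nonneg (norm_nonneg b)).2 fun p =>
    (HasSolidNorm.solid (by simpa only [Pi.abs_apply] using h p)).trans (norm_le_pi_norm b p)

/-- An eigenvector `w` with `‖μ‖ ≥ 1` would give `(1 - J) |w| ≤ 0`, hence `|w| ≤ 0`. -/
lemma norm_lt_one_of_mem_spectrum_of_nonneg [DecidableEq ι] {J S : Matrix ι ι ℝ}
    (hJ : ∀ p q, 0 ≤ J p q) (hS : ∀ p q, 0 ≤ S p q) (hSJ : S * (1 - J) = 1) {μ : ℂ}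
    (hμ : μ ∈ spectrum ℂ (J.map Complex.ofReal)) : ‖μ‖ < 1 := by
  rw [← spectrum_toLin', ← Module.End.hasEigenvalue_iff_mem_spectrum] at hμ
  obtain ⟨w, hw, hw0⟩ : ∃ w, J.map Complex.ofReal *ᵥ w = μ • w ∧ w ≠ 0 := by
    simpa [Module.End.hasEigenvector_iff] using hμ.exists_hasEigenvector
  by_contra! hμ1
  set u : ι → ℝ := fun p => ‖w p‖
  have hJu : u ≤ J *ᵥ u := fun p =>
    calc u p ≤ ‖μ‖ * u p := le_mul_of_one_le_left (norm_nonneg _) hμ1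
      _ = ‖∑ q, (J p q : ℂ) * w q‖ := by
          rw [← norm_mul, ← smul_eq_mul, ← Pi.smul_apply, ← hw]
          simp [mulVec, dotProduct]
      _ ≤ ∑ q, J p q * u q := by
          refine (norm_sum_le _ _).trans_eq (Finset.sum_congr rfl fun q _ => ?_)
          rw [norm_mul, Complex.norm_real, Real.norm_of_nonneg (hJ p q)]
  have hu : u ≤ 0 := by
    have h1J : (1 - J) *ᵥ u ≤ 0 := by rw [sub_mulVec, one_mulVec]; exact sub_nonpos.2 hJu
    have := mulVec_le_mulVec_of_nonneg hS h1J
    rwa [mulVec_mulVec, hSJ, one_mulVec, mulVec_zero] at this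
  exact hw0 (funext fun p => norm_le_zero_iff.1 (hu p))

end NonnegMatrix

lemma tendsto_of_norm_sub_succ_le_mul {X : Type*} [SeminormedAddCommGroup X] {x : ℕ → X}
    {a : X} {c : ℝ} (hc0 : 0 ≤ c) (hc1 : c < 1) (h : ∀ k, ‖x (k + 1) - a‖ ≤ c * ‖x k - a‖) :
    Tendsto x atTop (𝓝 a) := by
  rw [tendsto_iff_norm_sub_tendsto_zero]
  refine squeeze_zero (fun _ => norm_nonneg _)
    (fun k => le_geom (u := fun k => ‖x k - a‖) hc0 k fun j _ => h j) ?_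
  simpa using (tendsto_pow_atTop_nhds_zero_of_lt_one hc0 hc1).mul_const ‖x 0 - a‖

lemma relaxation_factor_lt_one {θ η ω : ℝ} (hθ : θ < 1) (hηθ : η ≤ θ)
    (hω : 0 < ω ∧ ω < 2 / (1 + θ)) : ω * η + |1 - ω| < 1 := by
  have hωη : ω * η ≤ ω * θ := mul_le_mul_of_nonneg_left hηθ hω.1.le
  rcases le_or_gt ω 1 with hω1 | hω1
  · rw [abs_of_nonneg (sub_nonneg.2 hω1)]
    nlinarith [hω.1]
  · have hθ' : 0 < 1 + θ := by
      by_contra! h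
      linarith [hω.2.trans_le (div_nonpos_of_nonneg_of_nonpos zero_le_two h)]
    rw [abs_of_neg (sub_neg.2 hω1)]
    linarith [(lt_div_iff₀ hθ').1 hω.2]

section FinDim

variable {n : ℕ}

lemma infNorm_nonneg (T : Matrix (Fin n) (Fin n) ℝ) : 0 ≤ infNorm T :=
  Real.iSup_nonneg fun _ => Finset.sum_nonneg fun _ _ => abs_nonneg _

lemma sum_abs_le_infNorm (T : Matrix (Fin n) (Fin n) ℝ) (p : Fin n) :
    ∑ q, |T p q| ≤ infNorm T :=
  le_ciSup (f := fun r => ∑ q, |T r q|) (Set.finite_range _).bddAbove p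

lemma norm_mulVec_le_infNorm_mul (T : Matrix (Fin n) (Fin n) ℝ) (v : Fin n → ℝ) :
    ‖T *ᵥ v‖ ≤ infNorm T * ‖v‖ := by
  refine (pi_norm_le_iff_of_nonneg (mul_nonneg (infNorm_nonneg T) (norm_nonneg v))).2 fun p => ?_
  calc ‖(T *ᵥ v) p‖ = |∑ q, T p q * v q| := Real.norm_eq_abs _
    _ ≤ ∑ q, |T p q| * ‖v‖ := (Finset.abs_sum_le_sum_abs _ _).trans <|
        Finset.sum_le_sum fun q _ => by
          rw [abs_mul]; exact mul_le_mul_of_nonneg_left (norm_le_pi_norm v q) (abs_nonneg _)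
    _ ≤ infNorm T * ‖v‖ := by
        rw [← Finset.sum_mul]
        exact mul_le_mul_of_nonneg_right (sum_abs_le_infNorm T p) (norm_nonneg v)

lemma one_le_sum_infNorm [Nonempty (Fin n)] {m : ℕ} {E : Fin m → Matrix (Fin n) (Fin n) ℝ}
    (hE : ∑ i, E i = 1) : 1 ≤ ∑ i, infNorm (E i) := by
  obtain ⟨p⟩ := ‹Nonempty (Fin n)›
  calc (1 : ℝ) = ∑ i, E i p p := by rw [← Matrix.sum_apply, hE, one_apply_eq]
    _ ≤ ∑ i, ∑ q, |E i p q| := Finset.sum_le_sum fun i _ =>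
        (le_abs_self _).trans <|
          Finset.single_le_sum (fun q _ => abs_nonneg (E i p q)) (Finset.mem_univ p)
    _ ≤ ∑ i, infNorm (E i) := Finset.sum_le_sum fun i _ => sum_abs_le_infNorm _ p

lemma norm_sum_mulVec_le_of_partition {m : ℕ} {E : Fin m → Matrix (Fin n) (Fin n) ℝ}
    (hEdiag : ∀ i p q, p ≠ q → E i p q = 0) (hEnn : ∀ i p, 0 ≤ E i p p) (hEsum : ∑ i, E i = 1)
    {r : ℝ} (hr : 0 ≤ r) {v : Fin m → Fin n → ℝ} (hv : ∀ i, ‖v i‖ ≤ r) :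
    ‖∑ i, E i *ᵥ v i‖ ≤ r := by
  refine (pi_norm_le_iff_of_nonneg hr).2 fun p => ?_
  have hEp : ∑ i, E i p p = 1 := by rw [← Matrix.sum_apply, hEsum, one_apply_eq]
  calc ‖(∑ i, E i *ᵥ v i) p‖ = |∑ i, E i p p * v i p| := by
        rw [Real.norm_eq_abs, Finset.sum_apply]
        simp only [mulVec_apply_of_offDiag_eq_zero (hEdiag _)]
    _ ≤ ∑ i, E i p p * r := (Finset.abs_sum_le_sum_abs _ _).trans <|
        Finset.sum_le_sum fun i _ => by
          rw [abs_mul, abs_of_nonneg (hEnn i p)]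
          exact mul_le_mul_of_nonneg_left ((norm_le_pi_norm (v i) p).trans (hv i)) (hEnn i p)
    _ = r := by rw [← Finset.sum_mul, hEp, one_mul]

lemma norm_relaxed_sum_mulVec_sub_le {m : ℕ} {E : Fin m → Matrix (Fin n) (Fin n) ℝ}
    (hEdiag : ∀ i p q, p ≠ q → E i p q = 0) (hEnn : ∀ i p, 0 ≤ E i p p) (hEsum : ∑ i, E i = 1)
    {ω r : ℝ} (hω : 0 ≤ ω) (hr : 0 ≤ r) {x xstar : Fin n → ℝ} {y : Fin m → Fin n → ℝ}
    (hy : ∀ i, ‖y i - xstar‖ ≤ r) :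
    ‖ω • (∑ i, E i *ᵥ y i) + (1 - ω) • x - xstar‖ ≤ ω * r + |1 - ω| * ‖x - xstar‖ := by
  have hsplit : ω • (∑ i, E i *ᵥ y i) + (1 - ω) • x - xstar
      = ω • (∑ i, E i *ᵥ (y i - xstar)) + (1 - ω) • (x - xstar) := by
    have hstar : ∑ i, E i *ᵥ xstar = xstar := by rw [← sum_mulVec, hEsum, one_mulVec]
    simp only [mulVec_sub, Finset.sum_sub_distrib, hstar]
    module
  calc ‖ω • (∑ i, E i *ᵥ y i) + (1 - ω) • x - xstar‖
      ≤ ‖ω • ∑ i, E i *ᵥ (y i - xstar)‖ + ‖(1 - ω) • (x - xstar)‖ := hsplit ▸ norm_add_le _ _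
    _ = ω * ‖∑ i, E i *ᵥ (y i - xstar)‖ + |1 - ω| * ‖x - xstar‖ := by
        rw [norm_smul, norm_smul, Real.norm_of_nonneg hω, Real.norm_eq_abs]
    _ ≤ ω * r + |1 - ω| * ‖x - xstar‖ := by
        gcongr; exact norm_sum_mulVec_le_of_partition hEdiag hEnn hEsum hr hy

lemma specRad_nonneg (A : Matrix (Fin n) (Fin n) ℝ) : 0 ≤ specRad A :=
  Real.sSup_nonneg fun _ ⟨μ, _, hr⟩ => hr ▸ norm_nonneg μ

lemma specRad_lt_of_forall_norm_lt {A : Matrix (Fin n) (Fin n) ℝ} {r : ℝ} (hr : 0 < r)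
    (h : ∀ μ ∈ spectrum ℂ (A.map Complex.ofReal), ‖μ‖ < r) : specRad A < r := by
  unfold specRad
  set S := {r : ℝ | ∃ μ : ℂ, μ ∈ spectrum ℂ (A.map Complex.ofReal) ∧ r = ‖μ‖}
  rcases S.eq_empty_or_nonempty with hS | hS
  · rwa [hS, Real.sSup_empty]
  · have hfin : S.Finite := by
      convert ((A.map Complex.ofReal).finite_spectrum).image (‖·‖) using 1
      ext; simp [S, eq_comm]
    obtain ⟨μ, hμ, hsup⟩ := hS.csSup_mem hfin
    rw [hsup]
    exact h μ hμ

namespace IsMMat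

variable {M : Matrix (Fin n) (Fin n) ℝ}

lemma inv_mulVec_mono (hM : IsMMat M) {u v : Fin n → ℝ} (h : u ≤ v) : M⁻¹ *ᵥ u ≤ M⁻¹ *ᵥ v :=
  mulVec_le_mulVec_of_nonneg hM.2.2 h

lemma nonpos_of_mulVec_nonpos (hM : IsMMat M) {v : Fin n → ℝ} (h : M *ᵥ v ≤ 0) : v ≤ 0 := by
  have := hM.inv_mulVec_mono h
  rwa [mulVec_mulVec, nonsing_inv_mul _ hM.2.1, one_mulVec, mulVec_zero] at this

lemma diag_pos (hM : IsMMat M) (p : Fin n) : 0 < M p p := by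
  have hrow : M p p * M⁻¹ p p + ∑ q ∈ Finset.univ.erase p, M p q * M⁻¹ q p = 1 := by
    rw [Finset.add_sum_erase _ (fun q => M p q * M⁻¹ q p) (Finset.mem_univ p), ← mul_apply,
      mul_nonsing_inv _ hM.2.1, one_apply_eq]
  have hoff : ∑ q ∈ Finset.univ.erase p, M p q * M⁻¹ q p ≤ 0 :=
    Finset.sum_nonpos fun q hq =>
      mul_nonpos_of_nonpos_of_nonneg (hM.1 p q (Finset.ne_of_mem_erase hq).symm) (hM.2.2 q p)
  by_contra! h
  nlinarith [hM.2.2 p p]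

lemma jacobi_specRad_lt_one (hM : IsMMat M) :
    specRad ((diagonal fun p => M p p)⁻¹ * (diagonal (fun p => M p p) - M)) < 1 := by
  set D := diagonal fun p => M p p
  have hDinv : D⁻¹ = diagonal fun p => (M p p)⁻¹ := by
    refine inv_eq_left_inv ?_
    rw [diagonal_mul_diagonal, ← diagonal_one]
    congr 1; funext p; exact inv_mul_cancel₀ (hM.diag_pos p).ne'
  have hD : IsUnit D.det := by
    rw [det_diagonal]; exact (Finset.prod_pos fun p _ => hM.diag_pos p).ne'.isUnit
  refine specRad_lt_of_forall_norm_lt one_pos fun μ => norm_lt_one_of_mem_spectrum_of_nonneg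
    (S := M⁻¹ * D) (fun p q => ?_) (fun p q => ?_) ?_
  · rw [hDinv, diagonal_mul, Matrix.sub_apply]
    rcases eq_or_ne p q with rfl | hpq
    · simp [D]
    · rw [show D p q = 0 from diagonal_apply_ne _ hpq]
      exact mul_nonneg (inv_nonneg.2 (hM.diag_pos p).le) (by linarith [hM.1 p q hpq])
  · rw [mul_diagonal]; exact mul_nonneg (hM.2.2 p q) (hM.diag_pos q).le
  · rw [Matrix.mul_sub D⁻¹, nonsing_inv_mul _ hD, sub_sub_cancel, Matrix.mul_assoc,
      ← Matrix.mul_assoc D, mul_nonsing_inv _ hD, Matrix.one_mul, nonsing_inv_mul _ hM.2.1]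

end IsMMat

namespace SolvesLCP

variable {M : Matrix (Fin n) (Fin n) ℝ} {g x : Fin n → ℝ}

lemma mul_sub_eq_zero (h : SolvesLCP M g x) (p : Fin n) : x p * ((M *ᵥ x) p - g p) = 0 :=
  (Finset.sum_eq_zero_iff_of_nonneg fun q _ => mul_nonneg (h.1 q) (sub_nonneg.2 (h.2.1 q))).1
    h.2.2 p (Finset.mem_univ p)

lemma of_splitting {A N : Matrix (Fin n) (Fin n) ℝ} {f : Fin n → ℝ} (hA : A = M - N)
    (h : SolvesLCP A f x) : SolvesLCP M (f + N *ᵥ x) x := by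
  have hres : ∀ p, (M *ᵥ x) p - (f + N *ᵥ x) p = (A *ᵥ x) p - f p := fun p => by
    rw [hA, sub_mulVec, Pi.sub_apply, Pi.add_apply]; ring
  refine ⟨h.1, fun p => sub_nonneg.1 ?_, ?_⟩
  · rw [hres]; exact sub_nonneg.2 (h.2.1 p)
  · simp only [hres]; exact h.2.2

/-- The positive part `d⁺` of `d = x - x' - M⁻¹|g - g'|` satisfies `M d⁺ ≤ 0`: off-diagonal
entries of `M` are nonpositive, and wherever `d > 0` we have `x > 0`, so `(Mx)_p = g_p`. -/
lemma sub_le_inv_mulVec_abs_sub (hM : IsMMat M) {g' x' : Fin n → ℝ} (hx : SolvesLCP M g x)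
    (hx' : SolvesLCP M g' x') : x - x' ≤ M⁻¹ *ᵥ |g - g'| := by
  set w := M⁻¹ *ᵥ |g - g'|
  have hw : ∀ p, 0 ≤ w p := by simpa [Pi.le_def] using hM.inv_mulVec_mono (abs_nonneg (g - g'))
  have hMw : M *ᵥ w = |g - g'| := by rw [mulVec_mulVec, mul_nonsing_inv _ hM.2.1, one_mulVec]
  set d := x - x' - w
  suffices d⁺ ≤ 0 from sub_nonpos.1 ((le_posPart d).trans this)
  refine hM.nonpos_of_mulVec_nonpos fun p => ?_
  by_cases hdp : 0 < d p
  · have hxp : 0 < x p := by linarith [hx'.1 p, hw p, show d p = x p - x' p - w p from rfl]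
    have hMx : (M *ᵥ x) p = g p := by
      linarith [sub_eq_zero.1 ((mul_eq_zero.1 (hx.mul_sub_eq_zero p)).resolve_left hxp.ne')]
    calc (M *ᵥ d⁺) p ≤ (M *ᵥ d) p :=
          mulVec_apply_le_of_offDiag_nonpos hM.1 (le_posPart d) (posPart_eq_self.2 hdp.le).symm
      _ = (M *ᵥ x) p - (M *ᵥ x') p - |g p - g' p| := by
          simp only [d, mulVec_sub, hMw, Pi.sub_apply, Pi.abs_apply]
      _ ≤ 0 := by rw [hMx]; linarith [hx'.2.1 p, le_abs_self (g p - g' p)]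
  · calc (M *ᵥ d⁺) p ≤ (M *ᵥ 0) p := mulVec_apply_le_of_offDiag_nonpos hM.1 (posPart_nonneg d)
          (posPart_eq_zero.2 (not_lt.1 hdp)).symm
      _ = 0 := by rw [mulVec_zero, Pi.zero_apply]

lemma abs_sub_le_inv_mulVec_abs_sub (hM : IsMMat M) {g' x' : Fin n → ℝ} (hx : SolvesLCP M g x)
    (hx' : SolvesLCP M g' x') : |x - x'| ≤ M⁻¹ *ᵥ |g - g'| :=
  sup_le (hx.sub_le_inv_mulVec_abs_sub hM hx') <| by
    simpa only [neg_sub, abs_sub_comm g' g] using hx'.sub_le_inv_mulVec_abs_sub hM hx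

end SolvesLCP

section Iterates

variable {M N : Matrix (Fin n) (Fin n) ℝ} {f xstar : Fin n → ℝ} {s : ℕ} {y : ℕ → Fin n → ℝ}

lemma abs_lcp_iterate_sub_le (hM : IsMMat M) (hN : ∀ p q, 0 ≤ N p q)
    (hstar : SolvesLCP M (f + N *ᵥ xstar) xstar)
    (hy : ∀ j < s, SolvesLCP M (f + N *ᵥ y j) (y (j + 1))) :
    ∀ j ≤ s, |y j - xstar| ≤ (M⁻¹ * N) ^ j *ᵥ |y 0 - xstar| := by
  intro j
  induction j with
  | zero => simp
  | succ j ih =>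
    intro hj
    calc |y (j + 1) - xstar| ≤ M⁻¹ *ᵥ |(f + N *ᵥ y j) - (f + N *ᵥ xstar)| :=
          (hy j hj).abs_sub_le_inv_mulVec_abs_sub hM hstar
      _ ≤ M⁻¹ *ᵥ (N *ᵥ |y j - xstar|) := by
          rw [add_sub_add_left_eq_sub, ← mulVec_sub]
          exact hM.inv_mulVec_mono (abs_mulVec_le_of_nonneg hN _)
      _ ≤ M⁻¹ *ᵥ (N *ᵥ ((M⁻¹ * N) ^ j *ᵥ |y 0 - xstar|)) :=
          hM.inv_mulVec_mono (mulVec_le_mulVec_of_nonneg hN (ih (by omega)))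
      _ = (M⁻¹ * N) ^ (j + 1) *ᵥ |y 0 - xstar| := by
          rw [mulVec_mulVec, mulVec_mulVec, pow_succ', Matrix.mul_assoc]

lemma norm_lcp_iterate_sub_le (hM : IsMMat M) (hN : ∀ p q, 0 ≤ N p q)
    (hstar : SolvesLCP M (f + N *ᵥ xstar) xstar)
    (hy : ∀ j < s, SolvesLCP M (f + N *ᵥ y j) (y (j + 1))) :
    ‖y s - xstar‖ ≤ infNorm ((M⁻¹ * N) ^ s) * ‖y 0 - xstar‖ :=
  calc ‖y s - xstar‖ ≤ ‖(M⁻¹ * N) ^ s *ᵥ |y 0 - xstar|‖ :=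
        norm_le_norm_of_abs_le_abs <|
          (abs_lcp_iterate_sub_le hM hN hstar hy s le_rfl).trans (le_abs_self _)
    _ ≤ infNorm ((M⁻¹ * N) ^ s) * ‖|y 0 - xstar|‖ := norm_mulVec_le_infNorm_mul _ _
    _ = infNorm ((M⁻¹ * N) ^ s) * ‖y 0 - xstar‖ := by
        congr 1; exact norm_abs_eq_norm _

end Iterates

end FinDim

theorem sync_relaxed_nonstationary_multisplitting_converges_M_general {n m : ℕ}
    (A : Matrix (Fin n) (Fin n) ℝ) (f xstar : Fin n → ℝ)
    (hA : IsMMat A)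
    (θ : ℝ)
    (hθ : θ = specRad ((Matrix.diagonal fun p => A p p)⁻¹ *
      (Matrix.diagonal (fun p => A p p) - A)))
    (ω : ℝ) (hω : 0 < ω ∧ ω < 2 / (1 + θ))
    (M N : Fin m → Matrix (Fin n) (Fin n) ℝ)
    (hsplit : ∀ i, A = M i - N i)
    (hMM : ∀ i, IsMMat (M i))
    (hNnn : ∀ i, ∀ p q, 0 ≤ N i p q)
    (E : Fin m → Matrix (Fin n) (Fin n) ℝ)
    (hEdiag : ∀ i p q, p ≠ q → E i p q = 0)
    (hEnn : ∀ i p, 0 ≤ E i p p)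
    (hEsum : ∑ i, E i = 1)
    (η : ℝ) (hη : η = θ / ∑ i, infNorm (E i))
    (st : ℕ)
    (hnorm : ∀ i, ∀ s, st ≤ s → infNorm (((M i)⁻¹ * N i) ^ s) ≤ η)
    (hxstar : SolvesLCP A f xstar)
    (s : ℕ → Fin m → ℕ) (hs : ∀ k i, st ≤ s k i)
    (x : ℕ → Fin n → ℝ) (y : ℕ → Fin m → ℕ → Fin n → ℝ)
    (hy0 : ∀ k i, y k i 0 = x k)
    (hy : ∀ k i j, 1 ≤ j → j ≤ s k i →
      SolvesLCP (M i) (fun p => f p + (N i *ᵥ y k i (j - 1)) p) (y k i j))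
    (hx : ∀ k, x (k + 1) = ω • (∑ i, E i *ᵥ y k i (s k i)) + (1 - ω) • x k) :
    Filter.Tendsto x Filter.atTop (nhds xstar) := by
  rcases isEmpty_or_nonempty (Fin n) with hn | hn
  · exact tendsto_const_nhds.congr fun k => Subsingleton.elim _ _
  have hθ0 : 0 ≤ θ := hθ ▸ specRad_nonneg _
  have hθ1 : θ < 1 := hθ ▸ hA.jacobi_specRad_lt_one
  have hη0 : 0 ≤ η := hη ▸ div_nonneg hθ0 (Finset.sum_nonneg fun i _ => infNorm_nonneg _)
  have hηθ : η ≤ θ := hη ▸ div_le_self hθ0 (one_le_sum_infNorm hEsum)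
  refine tendsto_of_norm_sub_succ_le_mul
    (add_nonneg (mul_nonneg hω.1.le hη0) (abs_nonneg _)) (relaxation_factor_lt_one hθ1 hηθ hω)
    fun k => ?_
  have hinner : ∀ i, ‖y k i (s k i) - xstar‖ ≤ η * ‖x k - xstar‖ := fun i => by
    have hsweep : ∀ j < s k i, SolvesLCP (M i) (f + N i *ᵥ y k i j) (y k i (j + 1)) :=
      fun j hj => by
        have h := hy k i (j + 1) le_add_self hj
        rw [Nat.add_sub_cancel] at h
        exact h
    calc ‖y k i (s k i) - xstar‖
        ≤ infNorm (((M i)⁻¹ * N i) ^ s k i) * ‖y k i 0 - xstar‖ :=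
          norm_lcp_iterate_sub_le (hMM i) (hNnn i) (hxstar.of_splitting (hsplit i)) hsweep
      _ ≤ η * ‖x k - xstar‖ := by
          rw [hy0]; gcongr; exact hnorm i _ (hs k i)
  calc ‖x (k + 1) - xstar‖ ≤ ω * (η * ‖x k - xstar‖) + |1 - ω| * ‖x k - xstar‖ := by
        rw [hx k]
        exact norm_relaxed_sum_mulVec_sub_le hEdiag hEnn hEsum hω.1.le
          (mul_nonneg hη0 (norm_nonneg _)) hinner
    _ = (ω * η + |1 - ω|) * ‖x k - xstar‖ := by ring

/-- Corollary 2.1: convergence of the synchronous relaxed nonstationary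
multisplitting method for LCP with an M-matrix and M-splittings. -/
theorem sync_relaxed_nonstationary_multisplitting_converges_M {n m : ℕ}
    (A : Matrix (Fin n) (Fin n) ℝ) (f xstar : Fin n → ℝ)
    (hA : IsMMat A)
    (θ : ℝ)
    (hθ : θ = specRad ((Matrix.diagonal fun p => A p p)⁻¹ *
      (Matrix.diagonal (fun p => A p p) - A)))
    (ω : ℝ) (hω : 0 < ω ∧ ω < 2 / (1 + θ))
    (M N : Fin m → Matrix (Fin n) (Fin n) ℝ)
    (hsplit : ∀ i, A = M i - N i)
    (hMM : ∀ i, IsMMat (M i))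
    (hNnn : ∀ i, ∀ p q, 0 ≤ N i p q)
    (E : Fin m → Matrix (Fin n) (Fin n) ℝ)
    (hEdiag : ∀ i p q, p ≠ q → E i p q = 0)
    (hEnn : ∀ i p, 0 ≤ E i p p)
    (hEsum : ∑ i, E i = 1)
    (η : ℝ) (hη : η = θ / ∑ i, infNorm (E i))
    (st : ℕ) (hst : 0 < st)
    (hnorm : ∀ i, ∀ s, st ≤ s → infNorm (((M i)⁻¹ * N i) ^ s) ≤ η)
    (hxstar : SolvesLCP A f xstar)
    (s : ℕ → Fin m → ℕ) (hs : ∀ k i, st ≤ s k i)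
    (x : ℕ → Fin n → ℝ) (y : ℕ → Fin m → ℕ → Fin n → ℝ)
    (hy0 : ∀ k i, y k i 0 = x k)
    (hy : ∀ k i j, 1 ≤ j → j ≤ s k i →
      SolvesLCP (M i) (fun p => f p + (N i *ᵥ y k i (j - 1)) p) (y k i j))
    (hx : ∀ k, x (k + 1) = ω • (∑ i, E i *ᵥ y k i (s k i)) + (1 - ω) • x k) :
    Filter.Tendsto x Filter.atTop (nhds xstar) :=
  sync_relaxed_nonstationary_multisplitting_converges_M_general A f xstar hA θ hθ ω hω M N hsplit
    hMM hNnn E hEdiag hEnn hEsum η hη st hnorm hxstar s hs x y hy0 hy hx
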